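/- arXiv:1703.05212 — 2 statements merged into one kernel-verified Lean document; each statement's English description precedes it below -/
import Mathlib

section
/- Let X be a locally compact separable metric space, f : X → ℝ a continuous function, r ∈ ℕ, g : X → ℝ^r a continuous map, and c ∈ ℝ a real number that is not a local extremum of f restricted to the set fat_g X. Then for every open subset B ⊆ X, every compact subset K ⊆ B, and each a ∈ {0,1}, the set g(K ∩ U^∂(f,c)) \ g(B ∩ U^a(f,c)) is nowhere dense in ℝ^r. -/
open TopologicalSpace

/-- `c` is a local maximum (resp. minimum) of `f` restricted to `A` if there is an open set
`V` such that `c` is the maximum (resp. minimum) value of `f` on `V ∩ A`, attained there;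
a local extremum is a local maximum or a local minimum. -/
def IsLocalExtremumOn {X : Type*} [TopologicalSpace X] (f : X → ℝ) (A : Set X) (c : ℝ) :
    Prop :=
  (∃ V : Set X, IsOpen V ∧ c ∈ f '' (V ∩ A) ∧ ∀ y ∈ V ∩ A, f y ≤ c) ∨
  (∃ V : Set X, IsOpen V ∧ c ∈ f '' (V ∩ A) ∧ ∀ y ∈ V ∩ A, c ≤ f y)

/-- `U^0(f,c) = {x | f x < c}` and `U^1(f,c) = {x | f x > c}`. -/
def Uset {X : Type*} (f : X → ℝ) (c : ℝ) : Bool → Set X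
  | false => {x | f x < c}
  | true => {x | c < f x}

/-- The set of fat points of `A ⊆ X` with respect to `g : X → ℝ^r`. -/
def fatPoints {X : Type*} [TopologicalSpace X] {r : ℕ}
    (g : X → EuclideanSpace ℝ (Fin r)) (A : Set X) : Set X :=
  {x ∈ A | ∀ V ∈ nhds x, (interior (g '' (A ∩ V))).Nonempty}

/-!
If the closure of `S := g(K ∩ f⁻¹{c}) \ g(B ∩ U^a(f,c))` had nonempty interior `W`, then
`W ⊆ g(K ∩ f⁻¹{c})`, and a Baire argument using local compactness yields a fat point
`x ∈ K ∩ f⁻¹{c}` with `g x ∈ W`. As `c` is not a local extremum on the fat points, some fat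
`y ∈ B ∩ U^a(f,c)` has `g y ∈ W`, so the image of a small neighbourhood of `y` has nonempty
interior inside `W ∩ g(B ∩ U^a(f,c))`: a nonempty open subset of `closure S` disjoint from `S`,
which is impossible.
-/

open Set Topology

lemma isOpen_uset {X : Type*} [TopologicalSpace X] {f : X → ℝ} (hf : Continuous f)
    (c : ℝ) (a : Bool) : IsOpen (Uset f c a) := by
  cases a
  · exact isOpen_lt hf continuous_const
  · exact isOpen_lt continuous_const hf

lemma exists_mem_uset_of_not_isLocalExtremumOn {X : Type*} [TopologicalSpace X]
    {f : X → ℝ} {A : Set X} {c : ℝ} (hc : ¬ IsLocalExtremumOn f A c) {V : Set X}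
    (hV : IsOpen V) (hcV : c ∈ f '' (V ∩ A)) (a : Bool) : ∃ y ∈ V ∩ A, y ∈ Uset f c a := by
  simp only [IsLocalExtremumOn, not_or, not_exists, not_and, not_forall, not_le, exists_prop] at hc
  cases a
  · exact hc.2 V hV hcV
  · exact hc.1 V hV hcV

section FatPoints

variable {X : Type*} [TopologicalSpace X] [LocallyCompactSpace X] {r : ℕ}
  {g : X → EuclideanSpace ℝ (Fin r)}

lemma exists_mem_nhds_isNowhereDense_image_of_notMem_fatPoints (hg : Continuous g) {x : X}
    (hx : x ∉ fatPoints g univ) : ∃ C ∈ 𝓝 x, IsNowhereDense (g '' C) := by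
  simp only [fatPoints, mem_univ, univ_inter, true_and, mem_ofPred_eq, not_forall,
    not_nonempty_iff_eq_empty] at hx
  obtain ⟨V, hV, hVint⟩ := hx
  obtain ⟨C, hC, hCV, hCc⟩ := local_compact_nhds hV
  refine ⟨C, hC, (hCc.image hg).isClosed.isNowhereDense_iff.mpr ?_⟩
  exact subset_eq_empty (interior_mono (image_mono hCV)) hVint

/-- Images of finitely many compact neighbourhoods of non-fat points are closed and nowhere
dense, so by Baire they cannot cover the open set `interior (g '' Q)`. -/
lemma exists_mem_fatPoints_of_interior_image_nonempty (hg : Continuous g) {Q : Set X}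
    (hQ : IsCompact Q) (hint : (interior (g '' Q)).Nonempty) :
    (Q ∩ fatPoints g univ).Nonempty := by
  by_contra hno
  have hnotfat : ∀ x ∈ Q, x ∉ fatPoints g univ := fun x hxQ hx => hno ⟨x, hxQ, hx⟩
  choose C hC hCnd using fun x hx =>
    exists_mem_nhds_isNowhereDense_image_of_notMem_fatPoints hg (hnotfat x hx)
  obtain ⟨t, hcov⟩ := hQ.elim_nhds_subcover' C hC
  have hmeagre : IsMeagre (⋃ x ∈ (t : Set Q), g '' C x x.2) :=
    isMeagre_biUnion t.countable_toSet fun x _ => (hCnd x x.2).isMeagre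
  refine not_isMeagre_of_isOpen isOpen_interior hint (hmeagre.mono ?_)
  rintro _ hy
  obtain ⟨q, hq, rfl⟩ := interior_subset hy
  obtain ⟨x, hxt, hqx⟩ := mem_iUnion₂.mp (hcov hq)
  exact mem_biUnion hxt (mem_image_of_mem g hqx)

lemma exists_mem_fatPoints_image_mem_of_subset_image (hg : Continuous g) {K : Set X}
    (hK : IsCompact K) {U : Set (EuclideanSpace ℝ (Fin r))} (hU : IsOpen U)
    (hne : U.Nonempty) (hUK : U ⊆ g '' K) : ∃ x ∈ K ∩ fatPoints g univ, g x ∈ U := by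
  obtain ⟨z, hz⟩ := hne
  obtain ⟨N, hN, hNc, hNU⟩ := exists_mem_nhds_isClosed_subset (hU.mem_nhds hz)
  have hNQ : N ⊆ g '' (K ∩ g ⁻¹' N) := by
    intro w hw
    obtain ⟨k, hk, rfl⟩ := hUK (hNU hw)
    exact ⟨k, ⟨hk, hw⟩, rfl⟩
  obtain ⟨x, ⟨hxK, hxN⟩, hx⟩ := exists_mem_fatPoints_of_interior_image_nonempty hg
    (hK.inter_right (hNc.preimage hg)) ⟨z, interior_mono hNQ (mem_interior_iff_mem_nhds.mpr hN)⟩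
  exact ⟨x, ⟨hxK, hx⟩, hNU hxN⟩

end FatPoints

theorem image_compact_bd_diff_nowhereDense_general (X : Type*) [MetricSpace X]
    [LocallyCompactSpace X]
    (f : X → ℝ) (hf : Continuous f) (r : ℕ)
    (g : X → EuclideanSpace ℝ (Fin r)) (hg : Continuous g) (c : ℝ)
    (hc : ¬ IsLocalExtremumOn f (fatPoints g Set.univ) c) :
    ∀ B : Set X, IsOpen B → ∀ K : Set X, IsCompact K → K ⊆ B → ∀ a : Bool,
      IsNowhereDense (g '' (K ∩ f ⁻¹' {c}) \ g '' (B ∩ Uset f c a)) := by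
  intro B hB K hK hKB a
  set S := g '' (K ∩ f ⁻¹' {c}) \ g '' (B ∩ Uset f c a)
  set W := interior (closure S)
  have hKc : IsCompact (K ∩ f ⁻¹' {c}) := hK.inter_right (isClosed_singleton.preimage hf)
  rw [IsNowhereDense, ← not_nonempty_iff_eq_empty]
  intro hW
  have hWK : W ⊆ g '' (K ∩ f ⁻¹' {c}) :=
    interior_subset.trans (closure_minimal sdiff_subset (hKc.image hg).isClosed)
  obtain ⟨x, ⟨⟨hxK, hxc⟩, hxfat⟩, hxW⟩ :=
    exists_mem_fatPoints_image_mem_of_subset_image hg hKc isOpen_interior hW hWK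
  obtain ⟨y, ⟨⟨hyB, hyW⟩, hyfat⟩, hya⟩ := exists_mem_uset_of_not_isLocalExtremumOn hc
    (hB.inter (isOpen_interior.preimage hg)) ⟨x, ⟨⟨hKB hxK, hxW⟩, hxfat⟩, hxc⟩ a
  set V := B ∩ Uset f c a ∩ g ⁻¹' W
  have hV : V ∈ 𝓝 y :=
    ((hB.inter (isOpen_uset hf c a)).inter (isOpen_interior.preimage hg)).mem_nhds
      ⟨⟨hyB, hya⟩, hyW⟩
  obtain ⟨p, hp⟩ := hyfat.2 V hV
  rw [univ_inter] at hp
  have hVS : interior (g '' V) ⊆ closure S :=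
    interior_subset.trans ((image_subset_iff.mpr fun _ hv => hv.2).trans interior_subset)
  have hdisj : Disjoint (interior (g '' V)) (closure S) :=
    (disjoint_sdiff_right.mono_left
      (interior_subset.trans (image_mono inter_subset_left))).closure_right isOpen_interior
  exact disjoint_left.mp hdisj hp (hVS hp)

/-- If `c` is not a local extremum of `f` restricted to `fat_g X`, then for every open
`B ⊆ X`, every compact `K ⊆ B` and each `a ∈ {0,1}`, the set
`g(K ∩ U^∂(f,c)) \ g(B ∩ U^a(f,c))` is nowhere dense in `ℝ^r`. -/
theorem image_compact_bd_diff_nowhereDense (X : Type*) [MetricSpace X]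
    [SeparableSpace X] [LocallyCompactSpace X]
    (f : X → ℝ) (hf : Continuous f) (r : ℕ)
    (g : X → EuclideanSpace ℝ (Fin r)) (hg : Continuous g) (c : ℝ)
    (hc : ¬ IsLocalExtremumOn f (fatPoints g Set.univ) c) :
    ∀ B : Set X, IsOpen B → ∀ K : Set X, IsCompact K → K ⊆ B → ∀ a : Bool,
      IsNowhereDense (g '' (K ∩ f ⁻¹' {c}) \ g '' (B ∩ Uset f c a)) :=
  image_compact_bd_diff_nowhereDense_general X f hf r g hg c hc
end

section
/- Let X be a locally compact separable metric space, f : X → ℝ a continuous function, r ∈ ℕ, g : X → ℝ^r a continuous map, and c ∈ ℝ a real number that is not a local extremum of f restricted to the set fat_g X. Then the set {p ∈ ℝ^r : c is a local extremum of f restricted to g⁻¹(p)} is meagre in ℝ^r. -/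
/-!
A local extremum of `f` is a local maximum of `f` or of `-f`, so it suffices to treat maxima.
If `c` is a local maximum of `f` on the fibre over `p`, this is witnessed by basic open sets with
`closure U'` compact and contained in `U`: the fibre meets `closure U' ∩ f⁻¹{c}` and `f ≤ c` on
the part of the fibre in `U`. There are countably many such pairs, and for each the set `M` of
such `p` is nowhere dense. Otherwise `M` is dense in a nonempty open `O`, and `O` lies in the
closed set `g '' (closure U' ∩ f⁻¹{c})`. Non-fat points are covered by countably many compact sets
with nowhere dense images, so by Baire some point of `closure U' ∩ f⁻¹{c} ∩ g⁻¹ O` is fat. Then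
`c` is a local maximum of `f` on the fat points of `U ∩ g⁻¹ O`: a fat point there with `f > c`
has a neighbourhood whose image contains an open subset of `O`, hence a point of `M`, over which
`f ≤ c` on `U`.
-/

open TopologicalSpace

open Set Filter Topology

def localMaxFibres {X E : Type*} (f : X → ℝ) (g : X → E) (c : ℝ) (K U : Set X) : Set E :=
  {p | (∃ x ∈ K, f x = c ∧ g x = p) ∧ ∀ y ∈ U, g y = p → f y ≤ c}

section

variable {X : Type*} [TopologicalSpace X] {r : ℕ}

def IsLocalMaxValueOn (f : X → ℝ) (A : Set X) (c : ℝ) : Prop :=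
  ∃ V : Set X, IsOpen V ∧ c ∈ f '' (V ∩ A) ∧ ∀ y ∈ V ∩ A, f y ≤ c

theorem isLocalExtremumOn_iff {f : X → ℝ} {A : Set X} {c : ℝ} :
    IsLocalExtremumOn f A c ↔ IsLocalMaxValueOn f A c ∨ IsLocalMaxValueOn (-f) A (-c) := by
  refine or_congr Iff.rfl (exists_congr fun V ↦ and_congr Iff.rfl (and_congr ?_ ?_))
  · simp only [mem_image, Pi.neg_apply, neg_inj]
  · simp only [Pi.neg_apply, neg_le_neg_iff]

theorem mem_fatPoints_univ {g : X → EuclideanSpace ℝ (Fin r)} {x : X} :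
    x ∈ fatPoints g univ ↔ ∀ V ∈ 𝓝 x, (interior (g '' V)).Nonempty := by
  simp [fatPoints]

theorem exists_mem_of_mem_fatPoints {g : X → EuclideanSpace ℝ (Fin r)} {y : X} {W : Set X}
    {S : Set (EuclideanSpace ℝ (Fin r))} (hy : y ∈ fatPoints g univ) (hW : W ∈ 𝓝 y)
    (hWS : g '' W ⊆ closure S) : ∃ x ∈ W, g x ∈ S := by
  obtain ⟨q, hq⟩ := mem_fatPoints_univ.mp hy W hW
  obtain ⟨p, hpS, hpW⟩ := (closure_inter_open_nonempty_iff isOpen_interior).mp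
    ⟨q, hWS (interior_subset hq), hq⟩
  obtain ⟨x, hxW, rfl⟩ := interior_subset hpW
  exact ⟨x, hxW, hpS⟩

theorem exists_mem_nhds_isNowhereDense_image [LocallyCompactSpace X]
    {g : X → EuclideanSpace ℝ (Fin r)} (hg : Continuous g) {x : X}
    (hx : x ∉ fatPoints g univ) : ∃ C ∈ 𝓝 x, IsNowhereDense (g '' C) := by
  simp only [mem_fatPoints_univ, not_forall, not_nonempty_iff_eq_empty, exists_prop] at hx
  obtain ⟨V, hV, hVint⟩ := hx
  obtain ⟨C, hC, hCV, hCc⟩ := local_compact_nhds hV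
  refine ⟨C, hC, ((hCc.image hg).isClosed.isNowhereDense_iff).mpr ?_⟩
  exact eq_empty_of_subset_empty (hVint ▸ interior_mono (image_mono hCV))

theorem isMeagre_image_of_disjoint_fatPoints [LocallyCompactSpace X]
    [SecondCountableTopology X] {g : X → EuclideanSpace ℝ (Fin r)} (hg : Continuous g)
    {T : Set X} (hT : Disjoint T (fatPoints g univ)) : IsMeagre (g '' T) := by
  have hC : ∀ x ∈ T, ∃ C ∈ 𝓝 x, IsNowhereDense (g '' C) := fun x hx ↦
    exists_mem_nhds_isNowhereDense_image hg (hT.notMem_of_mem_left hx)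
  choose! C hCx hCg using hC
  obtain ⟨t, htT, htc, hTt⟩ := countable_cover_nhdsWithin fun x hx ↦
    mem_nhdsWithin_of_mem_nhds (hCx x hx)
  refine (isMeagre_biUnion htc fun x hx ↦ (hCg x (htT hx)).isMeagre).mono ?_
  simpa only [image_iUnion₂] using image_mono hTt

theorem exists_mem_fatPoints_of_isOpen_subset_image [LocallyCompactSpace X]
    [SecondCountableTopology X] {g : X → EuclideanSpace ℝ (Fin r)} (hg : Continuous g)
    {T : Set X} {O : Set (EuclideanSpace ℝ (Fin r))} (hO : IsOpen O) (hne : O.Nonempty)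
    (hOT : O ⊆ g '' T) : ∃ x ∈ T, g x ∈ O ∧ x ∈ fatPoints g univ := by
  by_contra! h
  refine not_isMeagre_of_isOpen hO hne ?_
  have hdisj : Disjoint (T ∩ g ⁻¹' O) (fatPoints g univ) :=
    disjoint_left.mpr fun x hx ↦ h x hx.1 hx.2
  simpa [image_inter_preimage, inter_eq_right.mpr hOT] using
    isMeagre_image_of_disjoint_fatPoints hg hdisj

theorem isNowhereDense_localMaxFibres [LocallyCompactSpace X] [SecondCountableTopology X]
    {f : X → ℝ} {g : X → EuclideanSpace ℝ (Fin r)} {c : ℝ} {K U : Set X}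
    (hf : Continuous f) (hg : Continuous g) (hc : ¬ IsLocalMaxValueOn f (fatPoints g univ) c)
    (hK : IsCompact K) (hU : IsOpen U) (hKU : K ⊆ U) :
    IsNowhereDense (localMaxFibres f g c K U) := by
  set M := localMaxFibres f g c K U
  set O := interior (closure M)
  rw [IsNowhereDense, ← not_nonempty_iff_eq_empty]
  intro hO
  have hMK : closure M ⊆ g '' (K ∩ f ⁻¹' {c}) :=
    closure_minimal (by rintro _ ⟨⟨x, hxK, hfx, rfl⟩, -⟩; exact ⟨x, ⟨hxK, hfx⟩, rfl⟩)
      ((hK.inter_right (isClosed_singleton.preimage hf)).image hg).isClosed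
  obtain ⟨x₀, ⟨hx₀K, hfx₀⟩, hgx₀, hx₀fat⟩ := exists_mem_fatPoints_of_isOpen_subset_image hg
    isOpen_interior hO (interior_subset.trans hMK)
  have hV : IsOpen (U ∩ g ⁻¹' O) := hU.inter (isOpen_interior.preimage hg)
  refine hc ⟨U ∩ g ⁻¹' O, hV, ⟨x₀, ⟨⟨hKU hx₀K, hgx₀⟩, hx₀fat⟩, hfx₀⟩, ?_⟩
  rintro y ⟨⟨hyU, hyO⟩, hyfat⟩
  by_contra! hlt
  have hW : U ∩ g ⁻¹' O ∩ f ⁻¹' Ioi c ∈ 𝓝 y :=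
    (hV.inter (isOpen_Ioi.preimage hf)).mem_nhds ⟨⟨hyU, hyO⟩, hlt⟩
  obtain ⟨x, ⟨⟨hxU, -⟩, hfx⟩, hgx⟩ := exists_mem_of_mem_fatPoints hyfat hW
    (by rintro _ ⟨x, ⟨⟨-, hxO⟩, -⟩, rfl⟩; exact interior_subset hxO)
  exact not_lt_of_ge (hgx.2 x hxU rfl) hfx

theorem exists_localMaxFibres_of_isLocalMaxValueOn [T2Space X] [LocallyCompactSpace X]
    {b : Set (Set X)} (hb : IsTopologicalBasis b) {f : X → ℝ} {g : X → EuclideanSpace ℝ (Fin r)}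
    {c : ℝ} {p : EuclideanSpace ℝ (Fin r)} (h : IsLocalMaxValueOn f (g ⁻¹' {p}) c) :
    ∃ U ∈ b, ∃ U' ∈ b, IsCompact (closure U') ∧ closure U' ⊆ U ∧
      p ∈ localMaxFibres f g c (closure U') U := by
  obtain ⟨V, hV, ⟨x, ⟨hxV, hgx⟩, hfx⟩, hle⟩ := h
  obtain ⟨U, hUb, hxU, hUV⟩ := hb.exists_subset_of_mem_open hxV hV
  obtain ⟨K, hK, hxK, hKU⟩ := exists_compact_subset (hb.isOpen hUb) hxU
  obtain ⟨U', hU'b, hxU', hU'K⟩ := hb.exists_subset_of_mem_open hxK isOpen_interior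
  have hclU'K : closure U' ⊆ K := closure_minimal (hU'K.trans interior_subset) hK.isClosed
  exact ⟨U, hUb, U', hU'b, hK.of_isClosed_subset isClosed_closure hclU'K, hclU'K.trans hKU,
    ⟨x, subset_closure hxU', hfx, hgx⟩, fun y hyU hgy ↦ hle y ⟨hUV hyU, hgy⟩⟩

theorem isMeagre_setOf_isLocalMaxValueOn_fibre [T2Space X] [LocallyCompactSpace X]
    [SecondCountableTopology X] {f : X → ℝ} {g : X → EuclideanSpace ℝ (Fin r)} {c : ℝ}
    (hf : Continuous f) (hg : Continuous g) (hc : ¬ IsLocalMaxValueOn f (fatPoints g univ) c) :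
    IsMeagre {p | IsLocalMaxValueOn f (g ⁻¹' {p}) c} := by
  obtain ⟨b, hbc, -, hb⟩ := exists_countable_basis X
  let pairs := {q ∈ b ×ˢ b | IsCompact (closure q.2) ∧ closure q.2 ⊆ q.1}
  have hpairs : pairs.Countable := (hbc.prod hbc).mono (sep_subset _ _)
  refine (isMeagre_biUnion hpairs fun q hq ↦ (isNowhereDense_localMaxFibres hf hg hc hq.2.1
    (hb.isOpen hq.1.1) hq.2.2).isMeagre).mono fun p hp ↦ ?_
  obtain ⟨U, hU, U', hU', hK, hKU, hpM⟩ := exists_localMaxFibres_of_isLocalMaxValueOn hb hp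
  exact mem_iUnion₂.mpr ⟨(U, U'), ⟨⟨hU, hU'⟩, hK, hKU⟩, hpM⟩

end

/-- If `c` is not a local extremum of `f` restricted to `fat_g X`, then the set of
`p ∈ ℝ^r` such that `c` is a local extremum of `f` restricted to `g⁻¹(p)` is meagre. -/
theorem meagre_localExtremum_fibres (X : Type*) [MetricSpace X]
    [SeparableSpace X] [LocallyCompactSpace X]
    (f : X → ℝ) (hf : Continuous f) (r : ℕ)
    (g : X → EuclideanSpace ℝ (Fin r)) (hg : Continuous g) (c : ℝ)
    (hc : ¬ IsLocalExtremumOn f (fatPoints g Set.univ) c) :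
    IsMeagre {p : EuclideanSpace ℝ (Fin r) | IsLocalExtremumOn f (g ⁻¹' {p}) c} := by
  have : SecondCountableTopology X := UniformSpace.secondCountable_of_separable X
  simp only [isLocalExtremumOn_iff, not_or] at hc
  simp only [isLocalExtremumOn_iff, ofPred_or]
  exact (isMeagre_setOf_isLocalMaxValueOn_fibre hf hg hc.1).union
    (isMeagre_setOf_isLocalMaxValueOn_fibre hf.neg hg hc.2)
end
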